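/- Let A and B be finite types and let φ₀, φ₁ : A × B → ℂ be unit vectors. Then |⟨φ₀, φ₁⟩| ≤ F(ptrA φ₀, ptrA φ₁); that is, the overlap of any two purifications is at most the fidelity of the corresponding reduced density matrices. -/

import Mathlib

open scoped ComplexOrder
open Matrix

noncomputable section

/-- Partial trace over `A` of the outer product `|ψ⟩⟨ψ|`:
`(ptrA ψ) j q = ∑ i, ψ (i, j) * conj (ψ (i, q))`. -/
def ptrA {A B : Type*} [Fintype A] (ψ : A × B → ℂ) : Matrix B B ℂ :=
  fun j q => ∑ i : A, ψ (i, j) * (starRingEnd ℂ) (ψ (i, q))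

/-- The Kronecker product `S ⊗ I` with the identity on `B`, as a matrix on `A × B`. -/
def kronId {A B : Type*} [DecidableEq B] (S : Matrix A A ℂ) : Matrix (A × B) (A × B) ℂ :=
  Matrix.kroneckerMap (· * ·) S (1 : Matrix B B ℂ)

/-- `ptrA ψ` is a Gram matrix, hence positive semidefinite. -/
lemma ptrA_posSemidef {A B : Type*} [Fintype A] [Fintype B] (ψ : A × B → ℂ) :
    (ptrA ψ).PosSemidef := by
  set V : Matrix A B ℂ := Matrix.of fun i j => (starRingEnd ℂ) (ψ (i, j)) with hV
  have h := Matrix.posSemidef_conjTranspose_mul_self V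
  have heq : ptrA ψ = Vᴴ * V := by
    ext j q
    simp [Matrix.mul_apply, Matrix.conjTranspose_apply, ptrA, hV, mul_comm]
  rw [heq]; exact h

/-- The positive semidefinite square root of a positive semidefinite matrix
(the definition of `Matrix.PosSemidef.sqrt` in the older Mathlib, since removed). -/
def Matrix.PosSemidef.sqrt {n 𝕜 : Type*} [Fintype n] [DecidableEq n] [RCLike 𝕜]
    {A : Matrix n n 𝕜} (hA : A.PosSemidef) : Matrix n n 𝕜 :=
  hA.1.eigenvectorUnitary.1 * diagonal ((↑) ∘ (√·) ∘ hA.1.eigenvalues) *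
  (star hA.1.eigenvectorUnitary : Matrix n n 𝕜)

lemma Matrix.PosSemidef.posSemidef_sqrt {n 𝕜 : Type*} [Fintype n] [DecidableEq n] [RCLike 𝕜]
    {A : Matrix n n 𝕜} (hA : A.PosSemidef) : hA.sqrt.PosSemidef := by
  apply PosSemidef.mul_mul_conjTranspose_same
  refine posSemidef_diagonal_iff.mpr fun i ↦ ?_
  rw [Function.comp_apply, RCLike.nonneg_iff]
  constructor
  · simp only [Function.comp_apply, RCLike.ofReal_re]
    exact Real.sqrt_nonneg _
  · simp only [Function.comp_apply, RCLike.ofReal_im]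

lemma sqrt_mul_mul_sqrt_posSemidef {B : Type*} [Fintype B] [DecidableEq B]
    {ρ σ : Matrix B B ℂ} (hρ : ρ.PosSemidef) (hσ : σ.PosSemidef) :
    (hρ.sqrt * σ * hρ.sqrt).PosSemidef := by
  have h := hσ.mul_mul_conjTranspose_same hρ.sqrt
  rwa [hρ.posSemidef_sqrt.isHermitian.eq] at h

/-- The fidelity `F(ρ, σ) = tr √(√ρ * σ * √ρ)` of two positive semidefinite matrices. -/
def fidelity {B : Type*} [Fintype B] [DecidableEq B] {ρ σ : Matrix B B ℂ}
    (hρ : ρ.PosSemidef) (hσ : σ.PosSemidef) : ℝ :=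
  ((sqrt_mul_mul_sqrt_posSemidef hρ hσ).sqrt.trace).re


/-! Reshape the purifications into matrices `Mₖ : Matrix B A ℂ`, so that `ptrA φₖ = Mₖ Mₖᴴ` and the
overlap is `tr (M₁ M₀ᴴ)`. Polar decompositions `Mₖ = √ρₖ Vₖ` and `√ρ₀ √ρ₁ = T W`, with
`T = √(√ρ₀ ρ₁ √ρ₀)` and partial isometries `Vₖ`, `W`, turn the overlap into `tr (T K)` for the
contraction `K = W V₁ V₀ᴴ`. Cauchy–Schwarz for the Frobenius inner product of `Kᴴ √T` and `√T`
then gives `|tr (T K)| ≤ tr T = F(ρ₀, ρ₁)`. -/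

open scoped MatrixOrder

namespace Matrix

def ofVec {m n R : Type*} (v : n × m → R) : Matrix m n R :=
  of fun i j ↦ v (j, i)

lemma vec_ofVec {m n R : Type*} (v : n × m → R) : vec (ofVec v) = v :=
  rfl

variable {l m n 𝕜 : Type*} [Fintype l] [Fintype m] [Fintype n] [RCLike 𝕜]

section DecidableEq

variable [DecidableEq m]

lemma PosSemidef.sqrt_eq_cfc {A : Matrix m m 𝕜} (hA : A.PosSemidef) :
    hA.sqrt = cfc Real.sqrt A := by
  rw [hA.1.cfc_eq, IsHermitian.cfc, Unitary.conjStarAlgAut_apply]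
  rfl

lemma PosSemidef.sqrt_mul_self {A : Matrix m m 𝕜} (hA : A.PosSemidef) :
    hA.sqrt * hA.sqrt = A := by
  rw [hA.sqrt_eq_cfc, ← cfc_mul _ _ A]
  refine (cfc_congr fun x hx ↦ ?_).trans (cfc_id' ℝ A)
  exact Real.mul_self_sqrt (spectrum_nonneg_of_nonneg hA.nonneg hx)

lemma PosSemidef.conjTranspose_sqrt {A : Matrix m m 𝕜} (hA : A.PosSemidef) :
    hA.sqrtᴴ = hA.sqrt :=
  hA.posSemidef_sqrt.isHermitian.eq

lemma isStarProjection_conjTranspose_mul_self {V : Matrix m n 𝕜} [DecidableEq n]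
    (hV : IsStarProjection (V * Vᴴ)) : IsStarProjection (Vᴴ * V) := by
  have hVVV : V * Vᴴ * V = V := by
    have h := (mul_self_mul_conjTranspose_eq_zero V (1 - V * Vᴴ)).1 hV.one_sub_mul_self
    rwa [Matrix.sub_mul, Matrix.one_mul, sub_eq_zero, eq_comm] at h
  refine ⟨?_, ?_⟩
  · rw [IsIdempotentElem, Matrix.mul_assoc, ← Matrix.mul_assoc V, hVVV]
  · rw [IsSelfAdjoint, star_eq_conjTranspose, conjTranspose_mul, conjTranspose_conjTranspose]

lemma mul_mul_conjTranspose_le_one [DecidableEq l] {A : Matrix l m 𝕜} {B : Matrix m n 𝕜}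
    (hA : A * Aᴴ ≤ 1) (hB : B * Bᴴ ≤ 1) : A * B * (A * B)ᴴ ≤ 1 := by
  have h := PosSemidef.add hA (PosSemidef.mul_mul_conjTranspose_same hB A)
  rw [le_iff]
  convert h using 1
  simp only [conjTranspose_mul, Matrix.mul_sub, Matrix.sub_mul, Matrix.mul_one, Matrix.mul_assoc]
  abel

theorem PosSemidef.exists_eq_sqrt_mul {ρ : Matrix m m 𝕜} (hρ : ρ.PosSemidef) {M : Matrix m n 𝕜}
    (hM : M * Mᴴ = ρ) : ∃ V : Matrix m n 𝕜, M = hρ.sqrt * V ∧ IsStarProjection (V * Vᴴ) := by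
  have hcont (f : ℝ → ℝ) : ContinuousOn f (spectrum ℝ ρ) := ρ.finite_real_spectrum.continuousOn f
  have hSS : cfc Real.sqrt ρ * cfc Real.sqrt ρ = ρ := hρ.sqrt_eq_cfc ▸ hρ.sqrt_mul_self
  rw [hρ.sqrt_eq_cfc]
  -- `G` is the pseudo-inverse of `S = √ρ`, using `(√0)⁻¹ = 0`
  set S := cfc Real.sqrt ρ
  set G := cfc (fun x : ℝ ↦ (√x)⁻¹) ρ
  have hSGS : S * G * S = S := by
    rw [← cfc_mul _ _ ρ (hcont _) (hcont _), ← cfc_mul _ _ ρ (hcont _) (hcont _)]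
    congr 1
    funext x
    rcases eq_or_ne √x 0 with h | h
    · simp [h]
    · field_simp
  have hSG : Commute S G := cfc_commute_cfc _ _ ρ
  have hG : star G = G := IsSelfAdjoint.cfc.star_eq
  have hP : IsStarProjection (S * G) := by
    refine ⟨by rw [IsIdempotentElem, ← Matrix.mul_assoc, hSGS], ?_⟩
    rw [IsSelfAdjoint, star_mul, hG, IsSelfAdjoint.cfc.star_eq, hSG.eq]
  have hPM : (1 - S * G) * M = 0 := by
    refine (mul_self_mul_conjTranspose_eq_zero M _).1 ?_
    rw [hM, ← hSS, ← Matrix.mul_assoc, Matrix.sub_mul, Matrix.one_mul, hSGS,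
      sub_self, Matrix.zero_mul]
  refine ⟨G * M, ?_, ?_⟩
  · rw [Matrix.sub_mul, Matrix.one_mul, sub_eq_zero] at hPM
    rw [← Matrix.mul_assoc, ← hPM]
  · convert hP using 1
    rw [conjTranspose_mul, ← star_eq_conjTranspose G, hG, Matrix.mul_assoc G, ← Matrix.mul_assoc M,
      hM, ← hSS, Matrix.mul_assoc S, ← Matrix.mul_assoc G, ← hSG.eq, ← Matrix.mul_assoc, hSGS]

end DecidableEq

lemma norm_trace_conjTranspose_mul_sq_le (A B : Matrix m n 𝕜) :
    ‖(Aᴴ * B).trace‖ ^ 2 ≤ RCLike.re (Aᴴ * A).trace * RCLike.re (Bᴴ * B).trace := by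
  let a : EuclideanSpace 𝕜 (n × m) := WithLp.toLp 2 (vec A)
  let b : EuclideanSpace 𝕜 (n × m) := WithLp.toLp 2 (vec B)
  have h := inner_mul_inner_self_le (𝕜 := 𝕜) a b
  rw [norm_inner_symm b a, ← sq] at h
  simpa only [a, b, EuclideanSpace.inner_toLp_toLp, dotProduct_comm _ (star _),
    star_vec_dotProduct_vec] using h

lemma norm_trace_mul_le_re_trace [DecidableEq n] {T K : Matrix n n 𝕜} (hT : T.PosSemidef)
    (hK : K * Kᴴ ≤ 1) : ‖(T * K).trace‖ ≤ RCLike.re T.trace := by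
  set R := hT.sqrt
  have hRR : R * R = T := hT.sqrt_mul_self
  have hR : Rᴴ = R := hT.conjTranspose_sqrt
  have hTK : (T * K).trace = ((Kᴴ * R)ᴴ * R).trace := by
    rw [conjTranspose_mul, conjTranspose_conjTranspose, hR, ← hRR, Matrix.mul_assoc,
      trace_mul_comm, Matrix.mul_assoc]
  have hRKKR : RCLike.re ((Kᴴ * R)ᴴ * (Kᴴ * R)).trace ≤ RCLike.re T.trace := by
    have h : R * (1 - K * Kᴴ) * Rᴴ = T - (Kᴴ * R)ᴴ * (Kᴴ * R) := by
      rw [hR, conjTranspose_mul, conjTranspose_conjTranspose, hR, ← hRR]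
      simp only [Matrix.mul_sub, Matrix.sub_mul, Matrix.mul_one, Matrix.mul_assoc]
    have h0 := (RCLike.nonneg_iff.1 (hK.mul_mul_conjTranspose_same R).trace_nonneg).1
    rw [h, trace_sub, map_sub] at h0
    linarith
  have hT0 : 0 ≤ RCLike.re T.trace := (RCLike.nonneg_iff.1 hT.trace_nonneg).1
  have hCS := norm_trace_conjTranspose_mul_sq_le (Kᴴ * R) R
  rw [← hTK, hR, hRR] at hCS
  nlinarith [norm_nonneg (T * K).trace]

end Matrix

lemma ptrA_eq_ofVec_mul_conjTranspose {A B : Type*} [Fintype A] (ψ : A × B → ℂ) :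
    ptrA ψ = ofVec ψ * (ofVec ψ)ᴴ := by
  ext j q
  simp [ptrA, ofVec, mul_apply]

theorem norm_trace_mul_conjTranspose_le_fidelity {m n : Type*} [Fintype m] [DecidableEq m]
    [Fintype n] {ρ σ : Matrix m m ℂ} (hρ : ρ.PosSemidef) (hσ : σ.PosSemidef)
    {M₀ M₁ : Matrix m n ℂ} (h₀ : M₀ * M₀ᴴ = ρ) (h₁ : M₁ * M₁ᴴ = σ) :
    ‖(M₁ * M₀ᴴ).trace‖ ≤ fidelity hρ hσ := by
  classical
  obtain ⟨V₀, rfl, hV₀⟩ := hρ.exists_eq_sqrt_mul h₀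
  obtain ⟨V₁, rfl, hV₁⟩ := hσ.exists_eq_sqrt_mul h₁
  have hX : hρ.sqrt * hσ.sqrt * (hρ.sqrt * hσ.sqrt)ᴴ = hρ.sqrt * σ * hρ.sqrt := by
    rw [conjTranspose_mul, hρ.conjTranspose_sqrt, hσ.conjTranspose_sqrt, Matrix.mul_assoc,
      ← Matrix.mul_assoc hσ.sqrt, hσ.sqrt_mul_self, Matrix.mul_assoc]
  obtain ⟨W, hXW, hW⟩ := (sqrt_mul_mul_sqrt_posSemidef hρ hσ).exists_eq_sqrt_mul hX
  have hV₀ : V₀ᴴ * V₀ᴴᴴ ≤ 1 := by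
    simpa using (isStarProjection_conjTranspose_mul_self hV₀).le_one
  have htrace : (hσ.sqrt * V₁ * (hρ.sqrt * V₀)ᴴ).trace =
      ((sqrt_mul_mul_sqrt_posSemidef hρ hσ).sqrt * (W * (V₁ * V₀ᴴ))).trace := by
    rw [conjTranspose_mul, hρ.conjTranspose_sqrt, ← Matrix.mul_assoc, trace_mul_comm,
      ← Matrix.mul_assoc _ W, ← hXW]
    simp only [Matrix.mul_assoc]
  rw [htrace, fidelity, ← RCLike.re_to_complex]
  exact norm_trace_mul_le_re_trace (sqrt_mul_mul_sqrt_posSemidef hρ hσ).posSemidef_sqrt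
    (mul_mul_conjTranspose_le_one hW.le_one (mul_mul_conjTranspose_le_one hV₁.le_one hV₀))

theorem overlap_le_fidelity_general
    {A B : Type*} [Fintype A] [Fintype B] [DecidableEq B]
    (φ₀ φ₁ : A × B → ℂ) :
    ‖∑ k : A × B, (starRingEnd ℂ) (φ₀ k) * φ₁ k‖ ≤
      fidelity (ptrA_posSemidef φ₀) (ptrA_posSemidef φ₁) := by
  have hoverlap :
      ∑ k : A × B, (starRingEnd ℂ) (φ₀ k) * φ₁ k = (ofVec φ₁ * (ofVec φ₀)ᴴ).trace := by
    rw [trace_mul_comm, ← star_vec_dotProduct_vec, vec_ofVec, vec_ofVec]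
    rfl
  rw [hoverlap]
  exact norm_trace_mul_conjTranspose_le_fidelity _ _ (ptrA_eq_ofVec_mul_conjTranspose φ₀).symm
    (ptrA_eq_ofVec_mul_conjTranspose φ₁).symm

/-- The overlap of any two purifications is at most the fidelity of the corresponding
reduced density matrices. -/
theorem overlap_le_fidelity
    {A B : Type*} [Fintype A] [Fintype B] [DecidableEq A] [DecidableEq B]
    (φ₀ φ₁ : A × B → ℂ)
    (h₀ : ∑ k : A × B, (starRingEnd ℂ) (φ₀ k) * φ₀ k = 1)
    (h₁ : ∑ k : A × B, (starRingEnd ℂ) (φ₁ k) * φ₁ k = 1) :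
    ‖∑ k : A × B, (starRingEnd ℂ) (φ₀ k) * φ₁ k‖ ≤
      fidelity (ptrA_posSemidef φ₀) (ptrA_posSemidef φ₁) :=
  overlap_le_fidelity_general φ₀ φ₁
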